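/- arXiv:2208.00454 — 3 statements merged into one kernel-verified Lean document; each statement's English description precedes it below -/
import Mathlib

section
/- Let λ : ℕ → ℝ satisfy λ_k ≥ c for all k, for some constant c > 0, let 0 < s < 1, and let x be an element of ℓ² (square-summable complex sequences). Then the function t ↦ t^{s-1} · (k ↦ e^{-t·λ_k} x_k) is Bochner integrable on (0, ∞) with values in ℓ², and (1/Γ(s)) ∫₀^∞ t^{s-1} (k ↦ e^{-t·λ_k} x_k) dt = (k ↦ λ_k^{-s} x_k) in ℓ². -/
/-!
Since `λ_k ≥ c`, the integrand is dominated in ℓ² norm by `t^{s-1} e^{-ct} ‖x‖`, which is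
integrable on `(0, ∞)`; measurability is checked coordinatewise. Evaluation at `k` is a
continuous linear functional, so it commutes with the Bochner integral, and the `k`-th
coordinate reduces to `∫₀^∞ t^{s-1} e^{-λ_k t} dt = λ_k^{-s} Γ(s)`.
-/

open MeasureTheory Set Real

namespace lp

variable {ι : Type*} {E : ι → Type*} [∀ i, NormedAddCommGroup (E i)] {p : ENNReal}
  {α : Type*} [MeasurableSpace α] {μ : Measure α}

theorem aestronglyMeasurable_of_apply [Countable ι] [Fact (1 ≤ p)] (hp : p ≠ ⊤)
    {f : α → lp E p} (hf : ∀ i, AEStronglyMeasurable (fun a ↦ f a i) μ) :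
    AEStronglyMeasurable f μ := by
  classical
  refine aestronglyMeasurable_of_tendsto_ae Filter.atTop
    (f := fun (s : Finset ι) a ↦ ∑ i ∈ s, lp.single p i (f a i)) (fun s ↦ ?_)
    (ae_of_all _ fun a ↦ lp.hasSum_single hp (f a))
  exact Finset.aestronglyMeasurable_fun_sum _ fun i _ ↦
    (isometry_single i).continuous.comp_aestronglyMeasurable (hf i)

theorem integral_apply [∀ i, NormedSpace ℝ (E i)] [∀ i, CompleteSpace (E i)] [Fact (1 ≤ p)]
    {f : α → lp E p} (hf : Integrable f μ) (i : ι) :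
    (∫ a, f a ∂μ) i = ∫ a, f a i ∂μ :=
  ((evalCLM ℝ E p i).integral_comp_comm hf).symm

theorem norm_le_mul_norm_of_forall_norm_apply_le [∀ i, NormedSpace ℝ (E i)] [Fact (1 ≤ p)]
    {f g : lp E p} {C : ℝ} (hC : 0 ≤ C) (h : ∀ i, ‖f i‖ ≤ C * ‖g i‖) : ‖f‖ ≤ C * ‖g‖ := by
  calc ‖f‖ ≤ ‖C • g‖ := norm_mono (zero_lt_one.trans_le Fact.out).ne' fun i ↦ by
        rw [coeFn_smul, Pi.smul_apply, norm_smul, norm_of_nonneg hC]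
        exact h i
    _ = C * ‖g‖ := by rw [norm_smul, norm_of_nonneg hC]

end lp

theorem Real.integrableOn_rpow_mul_exp_neg_mul_Ioi {a r : ℝ} (ha : 0 < a) (hr : 0 < r) :
    IntegrableOn (fun t : ℝ ↦ t ^ (a - 1) * exp (-(r * t))) (Ioi 0) :=
  .of_integral_ne_zero (by rw [integral_rpow_mul_exp_neg_mul_Ioi ha hr]; positivity)

theorem Real.Gamma_inv_mul_integral_rpow_mul_exp_neg_mul_Ioi {a r : ℝ} (ha : 0 < a)
    (hr : 0 < r) :
    (Gamma a)⁻¹ * ∫ t : ℝ in Ioi 0, t ^ (a - 1) * exp (-(r * t)) = r ^ (-a) := by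
  rw [integral_rpow_mul_exp_neg_mul_Ioi ha hr, one_div, inv_rpow hr.le, ← rpow_neg hr.le,
    mul_comm, mul_assoc, mul_inv_cancel₀ (Gamma_pos_of_pos ha).ne', mul_one]

theorem statement1_general (lam : ℕ → ℝ) (c : ℝ) (hc : 0 < c) (hlam : ∀ k, c ≤ lam k)
    (s : ℝ) (hs0 : 0 < s)
    (x : lp (fun _ : ℕ => ℂ) 2)
    (y : ℝ → lp (fun _ : ℕ => ℂ) 2)
    (hy : ∀ t : ℝ, 0 < t → ∀ k : ℕ,
      y t k = (t ^ (s - 1) : ℝ) * Real.exp (-t * lam k) * x k)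
    (z : lp (fun _ : ℕ => ℂ) 2)
    (hz : ∀ k : ℕ, z k = (lam k ^ (-s) : ℝ) * x k) :
    IntegrableOn y (Set.Ioi (0 : ℝ)) ∧
      (1 / Real.Gamma s) • ∫ t in Set.Ioi (0 : ℝ), y t = z := by
  have hlam_pos k : 0 < lam k := hc.trans_le (hlam k)
  have hy_apply : ∀ t ∈ Ioi (0 : ℝ), ∀ k,
      y t k = ((t ^ (s - 1) * exp (-(lam k * t)) : ℝ) : ℂ) * x k := by
    intro t ht k
    rw [hy t ht k, neg_mul, mul_comm t]
    push_cast
    rfl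
  have hbound : ∀ t ∈ Ioi (0 : ℝ), ‖y t‖ ≤ t ^ (s - 1) * exp (-(c * t)) * ‖x‖ := by
    intro t (ht : 0 < t)
    refine lp.norm_le_mul_norm_of_forall_norm_apply_le (by positivity) fun k ↦ ?_
    rw [hy_apply t ht k, norm_mul, Complex.norm_real, norm_of_nonneg (by positivity)]
    gcongr
    exact hlam k
  have hmeas : AEStronglyMeasurable y (volume.restrict (Ioi 0)) :=
    lp.aestronglyMeasurable_of_apply ENNReal.ofNat_ne_top fun k ↦
      AEStronglyMeasurable.congr (by fun_prop)
        (ae_restrict_of_forall_mem measurableSet_Ioi fun t ht ↦ (hy_apply t ht k).symm)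
  have hint : IntegrableOn y (Ioi 0) :=
    ((integrableOn_rpow_mul_exp_neg_mul_Ioi hs0 hc).mul_const ‖x‖).mono' hmeas
      (ae_restrict_of_forall_mem measurableSet_Ioi hbound)
  refine ⟨hint, ?_⟩
  ext k
  rw [lp.coeFn_smul, Pi.smul_apply, lp.integral_apply hint k,
    setIntegral_congr_fun measurableSet_Ioi fun t ht ↦ hy_apply t ht k, integral_mul_const,
    integral_complex_ofReal, Complex.real_smul, ← mul_assoc, ← Complex.ofReal_mul, one_div,
    Gamma_inv_mul_integral_rpow_mul_exp_neg_mul_Ioi hs0 (hlam_pos k), hz k]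

/-- Spectral (multiplier) form of the Gamma-function representation of negative
fractional powers: if `λ_k ≥ c > 0`, `0 < s < 1`, `x ∈ ℓ²`, and `y t` is the ℓ²
sequence `k ↦ t^{s-1} e^{-tλ_k} x_k` while `z` is the ℓ² sequence `k ↦ λ_k^{-s} x_k`,
then `y` is Bochner integrable on `(0, ∞)` and `(1/Γ(s)) ∫₀^∞ y t dt = z`. -/
theorem statement1 (lam : ℕ → ℝ) (c : ℝ) (hc : 0 < c) (hlam : ∀ k, c ≤ lam k)
    (s : ℝ) (hs0 : 0 < s) (hs1 : s < 1)
    (x : lp (fun _ : ℕ => ℂ) 2)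
    (y : ℝ → lp (fun _ : ℕ => ℂ) 2)
    (hy : ∀ t : ℝ, 0 < t → ∀ k : ℕ,
      y t k = (t ^ (s - 1) : ℝ) * Real.exp (-t * lam k) * x k)
    (z : lp (fun _ : ℕ => ℂ) 2)
    (hz : ∀ k : ℕ, z k = (lam k ^ (-s) : ℝ) * x k) :
    IntegrableOn y (Set.Ioi (0 : ℝ)) ∧
      (1 / Real.Gamma s) • ∫ t in Set.Ioi (0 : ℝ), y t = z :=
  statement1_general lam c hc hlam s hs0 x y hy z hz
end

section
/- Let φ : ℝ → ℂ be measurable with φ(t) = 0 for all t ≤ 0, and suppose there exist constants C > 0 and c > 0 such that |φ(t)| ≤ C e^{-c t} for all t > 0. If ∫₀^∞ t^k φ(t) dt = 0 for every natural number k, then φ(t) = 0 for almost every t ∈ ℝ. -/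
/-!
Expanding `exp (-h t)` in its power series and integrating term by term (dominated convergence,
valid for `‖h‖ < c`) shows that the moments of `exp (-h t) φ` vanish as well. Iterating,
`∫ exp (-a t) ^ n φ = 0` for all `n`, where `a = c / 2`, so by Weierstrass approximation on
`[0, 1]` also `∫ F (exp (-a t)) φ = 0` for every continuous `F`. Every continuous `g` vanishing
near `+∞` has the form `F ∘ exp (-a ·)`, so `φ` integrates to zero against all test functions.
-/

open MeasureTheory Set Filter Polynomial

theorem integrableOn_Ioi_of_norm_le_mul_exp {E : Type*} [NormedAddCommGroup E] {f : ℝ → E}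
    {C b : ℝ} (hf : AEStronglyMeasurable f (volume.restrict (Ioi 0))) (hb : 0 < b)
    (hbound : ∀ t, 0 < t → ‖f t‖ ≤ C * Real.exp (-b * t)) :
    IntegrableOn f (Ioi 0) :=
  ((exp_neg_integrableOn_Ioi 0 hb).const_mul C).mono' hf
    (ae_restrict_of_forall_mem measurableSet_Ioi hbound)

theorem norm_pow_mul_le_mul_exp {ψ : ℝ → ℂ} {C b b' : ℝ}
    (hbound : ∀ t, 0 < t → ‖ψ t‖ ≤ C * Real.exp (-b * t)) (hb' : b' < b) (k : ℕ) {t : ℝ}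
    (ht : 0 < t) :
    ‖(t : ℂ) ^ k * ψ t‖ ≤ C * (k.factorial / (b - b') ^ k) * Real.exp (-b' * t) := by
  have hδ : 0 < b - b' := sub_pos.2 hb'
  have hpow : t ^ k ≤ k.factorial / (b - b') ^ k * Real.exp ((b - b') * t) := by
    have := Real.pow_div_factorial_le_exp _ (mul_nonneg hδ.le ht.le) k
    rw [mul_pow, div_le_iff₀ (by positivity)] at this
    rw [div_mul_eq_mul_div, le_div_iff₀ (by positivity)]
    linarith
  calc ‖(t : ℂ) ^ k * ψ t‖ = t ^ k * ‖ψ t‖ := by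
        rw [norm_mul, norm_pow, Complex.norm_real, Real.norm_of_nonneg ht.le]
    _ ≤ k.factorial / (b - b') ^ k * Real.exp ((b - b') * t) * (C * Real.exp (-b * t)) :=
        mul_le_mul hpow (hbound t ht) (norm_nonneg _) (by positivity)
    _ = C * (k.factorial / (b - b') ^ k) * Real.exp (-b' * t) := by
        rw [mul_mul_mul_comm, ← Real.exp_add]; ring_nf

theorem hasSum_integral_exp_neg_mul {ψ : ℝ → ℂ} {C b : ℝ} (hψ : Measurable ψ)
    (hbound : ∀ t, 0 < t → ‖ψ t‖ ≤ C * Real.exp (-b * t)) {h : ℂ} (hh : ‖h‖ < b) :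
    HasSum (fun j : ℕ => ∫ t in Ioi (0 : ℝ), (-(h * t)) ^ j / j.factorial * ψ t)
      (∫ t in Ioi (0 : ℝ), Complex.exp (-(h * t)) * ψ t) := by
  refine hasSum_integral_of_dominated_convergence
    (fun j t => (‖h‖ * t) ^ j / j.factorial * ‖ψ t‖) (fun j => by fun_prop) (fun j => ?_)
    (ae_of_all _ fun t => (Real.summable_pow_div_factorial _).mul_right _) ?_
    (ae_of_all _ fun t => ?_)
  · refine ae_restrict_of_forall_mem measurableSet_Ioi fun t (ht : 0 < t) => le_of_eq ?_
    simp [Real.norm_of_nonneg ht.le]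
  · have hsum (t : ℝ) :
        ∑' j : ℕ, (‖h‖ * t) ^ j / j.factorial * ‖ψ t‖ = Real.exp (‖h‖ * t) * ‖ψ t‖ := by
      rw [tsum_mul_right, Real.exp_eq_exp_ℝ, NormedSpace.exp_eq_tsum_div]
    simp_rw [hsum]
    refine integrableOn_Ioi_of_norm_le_mul_exp (C := C) (by fun_prop) (sub_pos.2 hh) fun t ht => ?_
    rw [norm_mul, Real.norm_of_nonneg (Real.exp_nonneg _), norm_norm]
    calc Real.exp (‖h‖ * t) * ‖ψ t‖ ≤ Real.exp (‖h‖ * t) * (C * Real.exp (-b * t)) :=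
          mul_le_mul_of_nonneg_left (hbound t ht) (Real.exp_nonneg _)
      _ = C * Real.exp (-(b - ‖h‖) * t) := by
          rw [mul_left_comm, ← Real.exp_add]; ring_nf
  · rw [Complex.exp_eq_exp_ℂ]
    exact (NormedSpace.expSeries_div_hasSum_exp (-(h * t))).mul_right (ψ t)

theorem integral_pow_mul_exp_neg_mul_eq_zero {ψ : ℝ → ℂ} {C b : ℝ} (hψ : Measurable ψ)
    (hbound : ∀ t, 0 < t → ‖ψ t‖ ≤ C * Real.exp (-b * t))
    (hmom : ∀ k : ℕ, ∫ t in Ioi (0 : ℝ), (t : ℂ) ^ k * ψ t = 0) {h : ℂ} (hh : ‖h‖ < b)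
    (k : ℕ) :
    ∫ t in Ioi (0 : ℝ), (t : ℂ) ^ k * (Complex.exp (-(h * t)) * ψ t) = 0 := by
  -- absorb `t ^ k` into the exponential bound, at a rate strictly between `‖h‖` and `b`
  have hh' : ‖h‖ < (‖h‖ + b) / 2 := by linarith
  have hseries := hasSum_integral_exp_neg_mul (ψ := fun t => (t : ℂ) ^ k * ψ t) (by fun_prop)
    (fun t ht => norm_pow_mul_le_mul_exp hbound (by linarith : (‖h‖ + b) / 2 < b) k ht) hh'
  have hterms (j : ℕ) :
      ∫ t in Ioi (0 : ℝ), (-(h * t)) ^ j / j.factorial * ((t : ℂ) ^ k * ψ t) = 0 := by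
    have hintegrand : (fun t : ℝ => (-(h * t)) ^ j / j.factorial * ((t : ℂ) ^ k * ψ t)) =
        fun t : ℝ => (-h) ^ j / j.factorial * ((t : ℂ) ^ (j + k) * ψ t) := by
      funext t; ring
    rw [hintegrand, integral_const_mul, hmom, mul_zero]
  simp only [hterms] at hseries
  simp_rw [mul_left_comm _ (Complex.exp _)]
  exact (hasSum_zero.unique hseries).symm

theorem integral_exp_neg_mul_pow_mul_eq_zero {φ : ℝ → ℂ} {C b : ℝ} (hφ : Measurable φ)
    (hbound : ∀ t, 0 < t → ‖φ t‖ ≤ C * Real.exp (-b * t))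
    (hmom : ∀ k : ℕ, ∫ t in Ioi (0 : ℝ), (t : ℂ) ^ k * φ t = 0) {h : ℂ} (hre : 0 ≤ h.re)
    (hh : ‖h‖ < b) (n : ℕ) :
    ∫ t in Ioi (0 : ℝ), Complex.exp (-(h * t)) ^ n * φ t = 0 := by
  suffices ∀ k : ℕ, ∫ t in Ioi (0 : ℝ), (t : ℂ) ^ k * (Complex.exp (-(h * t)) ^ n * φ t) = 0 by
    simpa using this 0
  induction n with
  | zero => simpa using hmom
  | succ n ih =>
    have hbound' (t : ℝ) (ht : 0 < t) :
        ‖Complex.exp (-(h * t)) ^ n * φ t‖ ≤ C * Real.exp (-b * t) := by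
      have hexp : ‖Complex.exp (-(h * t))‖ ≤ 1 := by
        rw [Complex.norm_exp, Real.exp_le_one_iff]
        simpa using mul_nonneg hre ht.le
      calc ‖Complex.exp (-(h * t)) ^ n * φ t‖ ≤ 1 ^ n * ‖φ t‖ := by
            rw [norm_mul, norm_pow]
            gcongr
        _ ≤ C * Real.exp (-b * t) := by simpa using hbound t ht
    simpa only [pow_succ', mul_assoc] using
      integral_pow_mul_exp_neg_mul_eq_zero (by fun_prop) hbound' ih hh

section Weierstrass

variable {α : Type*} [MeasurableSpace α] {μ : Measure α} {φ : α → ℂ} {u : α → ℝ} {a b : ℝ}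

theorem integrable_ofReal_comp_mul (hφ : Integrable φ μ) (hu : Measurable u)
    (hab : ∀ᵐ x ∂μ, u x ∈ Icc a b) {F : ℝ → ℝ} (hF : Continuous F) :
    Integrable (fun x => (F (u x) : ℂ) * φ x) μ := by
  obtain ⟨B, hB⟩ := isCompact_Icc.exists_bound_of_continuousOn hF.continuousOn
  refine hφ.bdd_mul (c := B) (by fun_prop) ?_
  filter_upwards [hab] with x hx
  simpa using hB _ hx

theorem integral_eval_comp_mul_eq_zero (hφ : Integrable φ μ) (hu : Measurable u)
    (hab : ∀ᵐ x ∂μ, u x ∈ Icc a b) (hmom : ∀ n : ℕ, ∫ x, (u x : ℂ) ^ n * φ x ∂μ = 0)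
    (p : ℝ[X]) : ∫ x, ((p.eval (u x) : ℝ) : ℂ) * φ x ∂μ = 0 := by
  have hterm : ∀ n : ℕ, Integrable (fun x => (u x : ℂ) ^ n * φ x) μ := fun n => by
    simpa using integrable_ofReal_comp_mul hφ hu hab (continuous_pow n)
  simp_rw [eval_eq_sum_range, Complex.ofReal_sum, Complex.ofReal_mul, Complex.ofReal_pow,
    Finset.sum_mul, mul_assoc]
  rw [integral_finsetSum _ fun n _ => (hterm n).const_mul _]
  simp [integral_const_mul, hmom]

theorem integral_comp_mul_eq_zero_of_integral_pow_mul_eq_zero (hφ : Integrable φ μ)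
    (hu : Measurable u) (hab : ∀ᵐ x ∂μ, u x ∈ Icc a b)
    (hmom : ∀ n : ℕ, ∫ x, (u x : ℂ) ^ n * φ x ∂μ = 0) {F : ℝ → ℝ} (hF : Continuous F) :
    ∫ x, (F (u x) : ℂ) * φ x ∂μ = 0 := by
  set K := ∫ x, ‖φ x‖ ∂μ
  have hK : 0 ≤ K := integral_nonneg fun x => norm_nonneg _
  refine norm_le_zero_iff.1 (le_of_forall_pos_le_add fun ε hε => ?_)
  obtain ⟨p, hp⟩ := exists_polynomial_near_of_continuousOn a b F hF.continuousOn
    (ε / (K + 1)) (by positivity)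
  have hdiff : ∫ x, (F (u x) : ℂ) * φ x ∂μ = ∫ x, ((F (u x) - p.eval (u x) : ℝ) : ℂ) * φ x ∂μ := by
    rw [← sub_zero (∫ x, (F (u x) : ℂ) * φ x ∂μ), ← integral_eval_comp_mul_eq_zero hφ hu hab hmom p,
      ← integral_sub (integrable_ofReal_comp_mul hφ hu hab hF)
        (integrable_ofReal_comp_mul hφ hu hab p.continuous)]
    congr 1; funext x; push_cast; ring
  calc ‖∫ x, (F (u x) : ℂ) * φ x ∂μ‖ ≤ ∫ x, ε / (K + 1) * ‖φ x‖ ∂μ := by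
        rw [hdiff]
        refine norm_integral_le_of_norm_le (hφ.norm.const_mul _) ?_
        filter_upwards [hab] with x hx
        rw [norm_mul, Complex.norm_real, Real.norm_eq_abs, abs_sub_comm]
        exact mul_le_mul_of_nonneg_right (hp _ hx).le (norm_nonneg _)
    _ = ε * (K / (K + 1)) := by rw [integral_const_mul]; ring
    _ ≤ 0 + ε := by
        rw [zero_add]
        exact mul_le_of_le_one_right hε.le ((div_le_one (by positivity)).2 (by linarith))

end Weierstrass

theorem exists_continuous_comp_exp_neg_mul_eq {g : ℝ → ℝ} (hg : Continuous g)
    (hg0 : ∀ᶠ t in atTop, g t = 0) {a : ℝ} (ha : 0 < a) :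
    ∃ F : ℝ → ℝ, Continuous F ∧ ∀ t, F (Real.exp (-(a * t))) = g t := by
  obtain ⟨M, hM⟩ := eventually_atTop.1 hg0
  -- truncating below `exp (-(a * M))` keeps the logarithm continuous and loses nothing,
  -- since `g` vanishes beyond `M`
  refine ⟨fun x => g (-Real.log (max x (Real.exp (-(a * M)))) / a), ?_, fun t => ?_⟩
  · have hlog : Continuous fun x => Real.log (max x (Real.exp (-(a * M)))) :=
      Real.continuousOn_log.comp_continuous (continuous_id.max continuous_const)
        fun x => (lt_max_of_lt_right (Real.exp_pos _)).ne'
    exact hg.comp (hlog.neg.div_const a)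
  · dsimp only
    rcases le_or_gt t M with htM | hMt
    · rw [max_eq_left (Real.exp_le_exp.2 (by nlinarith)), Real.log_exp, neg_neg,
        mul_div_cancel_left₀ t ha.ne']
    · rw [max_eq_right (Real.exp_le_exp.2 (by nlinarith)), Real.log_exp, neg_neg,
        mul_div_cancel_left₀ M ha.ne', hM M le_rfl, hM t hMt.le]

theorem statement2_general (φ : ℝ → ℂ) (hmeas : Measurable φ)
    (hsupp : ∀ t : ℝ, t ≤ 0 → φ t = 0)
    (C c : ℝ) (hc : 0 < c)
    (hbound : ∀ t : ℝ, 0 < t → ‖φ t‖ ≤ C * Real.exp (-c * t))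
    (hmom : ∀ k : ℕ, ∫ t in Set.Ioi (0 : ℝ), (t : ℂ) ^ k * φ t = 0) :
    ∀ᵐ t : ℝ, φ t = 0 := by
  have hc2 : 0 < c / 2 := half_pos hc
  have hφ : Integrable φ :=
    (integrableOn_Ioi_of_norm_le_mul_exp hmeas.aestronglyMeasurable hc hbound
      ).integrable_of_forall_notMem_eq_zero fun t ht => hsupp t (not_lt.1 ht)
  have hlaplace (n : ℕ) : ∫ t in Ioi (0 : ℝ), (Real.exp (-(c / 2 * t)) : ℂ) ^ n * φ t = 0 := by
    have hnorm : ‖((c / 2 : ℝ) : ℂ)‖ < c := by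
      rw [Complex.norm_real, Real.norm_of_nonneg hc2.le]; linarith
    simpa using integral_exp_neg_mul_pow_mul_eq_zero hmeas hbound hmom
      (by simpa using hc2.le) hnorm n
  have hcomp {F : ℝ → ℝ} (hF : Continuous F) :
      ∫ t in Ioi (0 : ℝ), (F (Real.exp (-(c / 2 * t))) : ℂ) * φ t = 0 :=
    integral_comp_mul_eq_zero_of_integral_pow_mul_eq_zero hφ.integrableOn (by fun_prop)
      (ae_restrict_of_forall_mem measurableSet_Ioi fun t (ht : 0 < t) =>
        ⟨(Real.exp_pos _).le, Real.exp_le_one_iff.2 (by nlinarith)⟩) hlaplace hF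
  refine ae_eq_zero_of_integral_contDiff_smul_eq_zero hφ.locallyIntegrable fun g hg hgs => ?_
  obtain ⟨F, hF, hFg⟩ := exists_continuous_comp_exp_neg_mul_eq hg.continuous
    (Eventually.mono (atTop_le_cocompact hgs.isCompact.compl_mem_cocompact)
      fun t ht => image_eq_zero_of_notMem_tsupport ht) hc2
  rw [← setIntegral_eq_integral_of_forall_compl_eq_zero fun t ht => by
    simp [hsupp t (not_lt.1 ht)]]
  simpa [hFg, Complex.real_smul] using hcomp hF

/-- If `φ : ℝ → ℂ` is measurable, vanishes on `(-∞, 0]`, satisfies the exponential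
bound `|φ(t)| ≤ C e^{-ct}` for `t > 0`, and all its moments `∫₀^∞ t^k φ(t) dt` vanish,
then `φ = 0` almost everywhere. -/
theorem statement2 (φ : ℝ → ℂ) (hmeas : Measurable φ)
    (hsupp : ∀ t : ℝ, t ≤ 0 → φ t = 0)
    (C c : ℝ) (hC : 0 < C) (hc : 0 < c)
    (hbound : ∀ t : ℝ, 0 < t → ‖φ t‖ ≤ C * Real.exp (-c * t))
    (hmom : ∀ k : ℕ, ∫ t in Set.Ioi (0 : ℝ), (t : ℂ) ^ k * φ t = 0) :
    ∀ᵐ t : ℝ, φ t = 0 :=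
  statement2_general φ hmeas hsupp C c hc hbound hmom
end

section
/- For every t > 0 and every real λ > 0, (1/(4√π · t^{3/2})) ∫₀^∞ e^{-u/(4t)} · sin(√(uλ))/√λ du = e^{-tλ}. -/
/-!
Substituting `u = x²` turns the integral into `2 ∫₀^∞ x e^{-x²/(4t)} sin(x√λ) dx`, which by
evenness is the full-line integral `∫ x e^{-ax²} sin(rx) dx`. Integration by parts against
`d/dx e^{-ax²} = -2ax e^{-ax²}` reduces this to `(r / 2a) ∫ e^{-ax²} cos(rx) dx`, the real part of
the Fourier transform of a Gaussian, which is `√(π/a) e^{-r²/(4a)}`.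
-/

open MeasureTheory Real Set

theorem integral_cos_mul_exp_neg_mul_sq {a : ℝ} (ha : 0 < a) (r : ℝ) :
    ∫ x : ℝ, cos (r * x) * exp (-a * x ^ 2) = √(π / a) * exp (-r ^ 2 / (4 * a)) := by
  have hsplit (x : ℝ) : Complex.exp (Complex.I * r * x) * Complex.exp (-a * x ^ 2) =
      (exp (-a * x ^ 2) : ℂ) * Complex.exp (↑(r * x) * Complex.I) := by
    push_cast
    ring_nf
  have hint :
      Integrable fun x : ℝ ↦ Complex.exp (Complex.I * r * x) * Complex.exp (-a * x ^ 2) := by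
    simp_rw [hsplit]
    exact (integrable_exp_neg_mul_sq ha).ofReal.mul_bdd (c := 1) (by fun_prop)
      (.of_forall fun x ↦ (Complex.norm_exp_ofReal_mul_I _).le)
  have hre := integral_re hint
  rw [fourierIntegral_gaussian (b := a) (by simpa using ha) r] at hre
  convert hre using 1
  · simp_rw [hsplit, RCLike.re_to_complex, Complex.re_ofReal_mul, Complex.exp_ofReal_mul_I_re,
      mul_comm]
  · rw [RCLike.re_to_complex, ← Complex.ofReal_div, ← Complex.ofReal_one, ← Complex.ofReal_ofNat,
      ← Complex.ofReal_div, ← Complex.ofReal_cpow (by positivity), ← sqrt_eq_rpow]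
    norm_cast

theorem integral_sin_mul_mul_exp_neg_mul_sq {a : ℝ} (ha : 0 < a) (r : ℝ) :
    ∫ x : ℝ, sin (r * x) * (x * exp (-a * x ^ 2)) =
      r / (2 * a) * ∫ x : ℝ, cos (r * x) * exp (-a * x ^ 2) := by
  have hgauss := integrable_exp_neg_mul_sq ha
  have hsin (f : ℝ → ℝ) (hf : Integrable f) : Integrable fun x ↦ sin (r * x) * f x :=
    hf.bdd_mul (c := 1) (by fun_prop) (.of_forall fun x ↦ by simpa using abs_sin_le_one _)
  have hu (x : ℝ) : HasDerivAt (fun x ↦ sin (r * x)) (r * cos (r * x)) x := by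
    simpa [mul_comm] using ((hasDerivAt_id x).const_mul r).sin
  have hv (x : ℝ) :
      HasDerivAt (fun x ↦ -(2 * a)⁻¹ * exp (-a * x ^ 2)) (x * exp (-a * x ^ 2)) x := by
    refine ((((hasDerivAt_pow 2 x).const_mul (-a)).exp).const_mul (-(2 * a)⁻¹)).congr_deriv ?_
    field_simp
    ring
  have hcos : Integrable fun x ↦ r * cos (r * x) * (-(2 * a)⁻¹ * exp (-a * x ^ 2)) :=
    (hgauss.const_mul _).bdd_mul (c := |r|) (by fun_prop) (.of_forall fun x ↦ by
      simpa [abs_mul] using mul_le_of_le_one_right (abs_nonneg r) (abs_cos_le_one _))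
  rw [integral_mul_deriv_eq_deriv_mul_of_integrable (fun x _ ↦ hu x) (fun x _ ↦ hv x)
    (hsin _ (integrable_mul_exp_neg_mul_sq ha)) hcos (hsin _ (hgauss.const_mul _)),
    ← integral_const_mul, ← integral_neg]
  congr 1 with x
  field_simp

theorem integral_Ioi_sin_mul_mul_exp_neg_mul_sq {a : ℝ} (ha : 0 < a) (r : ℝ) :
    ∫ x in Ioi 0, sin (r * x) * (x * exp (-a * x ^ 2)) =
      r / (4 * a) * √(π / a) * exp (-r ^ 2 / (4 * a)) := by
  have heven : ∫ x : ℝ, sin (r * |x|) * (|x| * exp (-a * |x| ^ 2)) =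
      ∫ x : ℝ, sin (r * x) * (x * exp (-a * x ^ 2)) := by
    congr 1 with x
    rcases abs_choice x with hx | hx <;> simp [hx, sin_neg]
  rw [integral_comp_abs (f := fun x ↦ sin (r * x) * (x * exp (-a * x ^ 2))),
    integral_sin_mul_mul_exp_neg_mul_sq ha, integral_cos_mul_exp_neg_mul_sq ha] at heven
  linear_combination heven / 2

theorem integral_Ioi_comp_sq {E : Type*} [NormedAddCommGroup E] [NormedSpace ℝ E] (g : ℝ → E) :
    ∫ x in Ioi 0, (2 * x) • g (x ^ 2) = ∫ y in Ioi 0, g y := by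
  have h := integral_comp_rpow_Ioi_of_pos (g := g) two_pos
  norm_num at h
  exact h

theorem integral_Ioi_exp_neg_mul_mul_sin_mul_sqrt {a : ℝ} (ha : 0 < a) (r : ℝ) :
    ∫ u in Ioi 0, exp (-a * u) * sin (r * √u) =
      r / (2 * a) * √(π / a) * exp (-r ^ 2 / (4 * a)) := by
  rw [← integral_Ioi_comp_sq, setIntegral_congr_fun measurableSet_Ioi
    (g := fun x ↦ 2 * (sin (r * x) * (x * exp (-a * x ^ 2)))) fun x (hx : 0 < x) ↦ by
      simp only [smul_eq_mul, sqrt_sq hx.le]; ring,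
    integral_const_mul, integral_Ioi_sin_mul_mul_exp_neg_mul_sq ha]
  ring

/-- Scalar subordination identity: for `t > 0` and `λ > 0`,
`(1/(4√π t^{3/2})) ∫₀^∞ e^{-u/(4t)} sin(√(uλ))/√λ du = e^{-tλ}`. -/
theorem statement6 (t lam : ℝ) (ht : 0 < t) (hlam : 0 < lam) :
    (1 / (4 * Real.sqrt π * t ^ (3 / 2 : ℝ))) *
      ∫ u in Set.Ioi (0 : ℝ),
        Real.exp (-u / (4 * t)) * (Real.sin (Real.sqrt (u * lam)) / Real.sqrt lam) =
    Real.exp (-t * lam) := by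
  have hintegrand (u : ℝ) : exp (-u / (4 * t)) * (sin √(u * lam) / √lam) =
      (√lam)⁻¹ * (exp (-(4 * t)⁻¹ * u) * sin (√lam * √u)) := by
    rw [sqrt_mul' u hlam.le]
    ring_nf
  have hsqrt : √(π / (4 * t)⁻¹) = 2 * √π * √t := by
    rw [div_inv_eq_mul, mul_comm, sqrt_mul (by positivity), sqrt_mul zero_le_four,
      show (4 : ℝ) = 2 ^ 2 by norm_num, sqrt_sq zero_le_two]
    ring
  have hpow : t ^ (3 / 2 : ℝ) = t * √t := by
    rw [show (3 / 2 : ℝ) = 1 + 1 / 2 by norm_num, rpow_add ht, rpow_one, sqrt_eq_rpow]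
  simp_rw [hintegrand]
  rw [integral_const_mul, integral_Ioi_exp_neg_mul_mul_sin_mul_sqrt (by positivity), hsqrt, hpow,
    sq_sqrt hlam.le]
  have : 0 < √lam := sqrt_pos.2 hlam
  have : 0 < √t := sqrt_pos.2 ht
  field_simp
end
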